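/- There is no vector v = (v₁,v₂,v₃) ∈ ℤ³ with Q(v,v) = 1 such that Bv = v or Bv = −v, where B = diag(1,1,−1). -/
import Mathlib

open Matrix

/-- The symmetric bilinear form with Gram matrix `[[0,1,0],[1,0,0],[0,0,−1]]` on `ℤ³`
(coordinates with respect to the basis `(S₁, S₂, Σ)`). -/
def QS (x y : Fin 3 → ℤ) : ℤ := x 0 * y 1 + x 1 * y 0 - x 2 * y 2

/-- The matrix `B = diag(1,1,−1)`. -/
def Bmat : Matrix (Fin 3) (Fin 3) ℤ := Matrix.diagonal ![1, 1, -1]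

/-- There is no `v ∈ ℤ³` with `Q(v,v) = 1` and `Bv = v` or `Bv = −v`. -/
theorem no_vector_square_one_B_eigenvector :
    ¬ ∃ v : Fin 3 → ℤ, QS v v = 1 ∧ (Bmat.mulVec v = v ∨ Bmat.mulVec v = -v) := by
  rintro ⟨v, hQ, h | h⟩
  · have h2 := congrFun h 2
    simp [Bmat, Matrix.mulVec_diagonal] at h2
    have h2' : v 2 = 0 := by linarith
    have : (2 : ℤ) ∣ 1 := ⟨v 0 * v 1, by rw [← hQ]; simp [QS, h2']; ring⟩
    norm_num at this
  · have h0 := congrFun h 0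
    have h1 := congrFun h 1
    simp [Bmat, Matrix.mulVec_diagonal] at h0 h1
    have h0' : v 0 = 0 := by linarith
    have h1' : v 1 = 0 := by linarith
    have : QS v v = -(v 2)^2 := by simp [QS, h0', h1']; ring
    nlinarith [sq_nonneg (v 2)]
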